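/- Let p and q be partitions of [k] with cr(p) ⊆ cr(q). Then for all x, y ∈ χ(p), if x ∼_p y then x ∼_q y; that is, the restriction of p to its set of crossers refines the restriction of q to χ(p). -/

import Mathlib

/-- The block relation of a finite partition of `Fin n` (partition of `[n]`):
`x ∼_p y` iff `x` and `y` lie in the same block of `p`. -/
def PartRel {n : ℕ} (p : Finpartition (Finset.univ : Finset (Fin n))) (x y : Fin n) : Prop :=
  ∃ B ∈ p.parts, x ∈ B ∧ y ∈ B

/-- `κ` is a crossing of the relation `r`: `κ = {a,b,c,d}` with `a < b < c < d`,
`r a c`, `r b d`, and `¬ r a b`. -/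
def IsCross {n : ℕ} (r : Fin n → Fin n → Prop) (κ : Finset (Fin n)) : Prop :=
  ∃ a b c d : Fin n, a < b ∧ b < c ∧ c < d ∧ κ = {a, b, c, d} ∧ r a c ∧ r b d ∧ ¬ r a b

/-- `cr p`: the set of crossings of the partition `p`. -/
def cr {n : ℕ} (p : Finpartition (Finset.univ : Finset (Fin n))) : Set (Finset (Fin n)) :=
  {κ | IsCross (PartRel p) κ}


/-- `crossers p` (`χ(p)`): the union of all crossings of `p`. -/
def crossers {n : ℕ} (p : Finpartition (Finset.univ : Finset (Fin n))) : Set (Fin n) :=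
  {x | ∃ κ ∈ cr p, x ∈ κ}

/-!
If `x < w < y` with `x ∼_p y`, `w ≁_p x`, and `w ∼_p w'` for some `w'` outside `[x, y]`, then
`x, w, y, w'` form a crossing of `p`, hence of `q`, and since a four-element set determines its
sorted enumeration, reading this crossing in `q` gives `x ∼_q y`. For a crossing `a < b < c < d`
of `p`, every `y ∼_p a` sits in such a configuration together with `a` or `c`, the witnesses
being taken among `b, d`; symmetrically for `y ∼_p b`. So the `p`-blocks of all crossers lie
inside `q`-blocks.
-/

lemma quadruple_eq_of_finset_eq {α : Type*} [LinearOrder α] {a b c d a' b' c' d' : α}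
    (hab : a < b) (hbc : b < c) (hcd : c < d)
    (hab' : a' < b') (hbc' : b' < c') (hcd' : c' < d')
    (h : ({a, b, c, d} : Finset α) = {a', b', c', d'}) :
    a = a' ∧ b = b' ∧ c = c' ∧ d = d' := by
  have mem : ∀ x, x = a ∨ x = b ∨ x = c ∨ x = d ↔ x = a' ∨ x = b' ∨ x = c' ∨ x = d' := by
    simpa only [Finset.ext_iff, Finset.mem_insert, Finset.mem_singleton] using h
  have ha : a = a' := by
    rcases (mem a').2 (Or.inl rfl) with h1 | h1 | h1 | h1 <;>
    rcases (mem a).1 (Or.inl rfl) with h2 | h2 | h2 | h2 <;> subst h1 <;> order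
  subst ha
  have hd : d = d' := by
    rcases (mem d').2 (by simp) with h1 | h1 | h1 | h1 <;>
    rcases (mem d).1 (by simp) with h2 | h2 | h2 | h2 <;> subst h1 <;> order
  subst hd
  have hb : b = b' := by
    rcases (mem b').2 (by simp) with h1 | h1 | h1 | h1 <;>
    rcases (mem b).1 (by simp) with h2 | h2 | h2 | h2 <;> subst h1 <;> order
  subst hb
  have hc : c = c' := by
    rcases (mem c').2 (by simp) with h1 | h1 | h1 | h1 <;> subst h1 <;> order
  exact ⟨rfl, rfl, hc, rfl⟩

namespace PartRel

variable {n : ℕ} {p : Finpartition (Finset.univ : Finset (Fin n))} {x y z : Fin n}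

lemma refl (p : Finpartition (Finset.univ : Finset (Fin n))) (x : Fin n) : PartRel p x x := by
  obtain ⟨B, hB, hx⟩ := p.exists_mem (Finset.mem_univ x)
  exact ⟨B, hB, hx, hx⟩

lemma symm (h : PartRel p x y) : PartRel p y x := by
  obtain ⟨B, hB, hx, hy⟩ := h
  exact ⟨B, hB, hy, hx⟩

lemma trans (h : PartRel p x y) (h' : PartRel p y z) : PartRel p x z := by
  obtain ⟨B, hB, hx, hy⟩ := h
  obtain ⟨B', hB', hy', hz⟩ := h'
  exact ⟨B, hB, hx, p.eq_of_mem_parts hB hB' hy hy' ▸ hz⟩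

end PartRel

section CrSubset

variable {k : ℕ} {p q : Finpartition (Finset.univ : Finset (Fin k))}

lemma partRel_of_insert_mem_cr {a b c d : Fin k} (hab : a < b) (hbc : b < c) (hcd : c < d)
    (h : ({a, b, c, d} : Finset (Fin k)) ∈ cr q) : PartRel q a c ∧ PartRel q b d := by
  obtain ⟨a', b', c', d', hab', hbc', hcd', hset, hac, hbd, -⟩ := h
  obtain ⟨rfl, rfl, rfl, rfl⟩ := quadruple_eq_of_finset_eq hab hbc hcd hab' hbc' hcd' hset
  exact ⟨hac, hbd⟩

lemma partRel_of_interleaved (hpq : cr p ⊆ cr q) {x y w w' : Fin k}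
    (hxw : x < w) (hwy : w < y) (hxy : PartRel p x y) (hww' : PartRel p w w')
    (hxw' : ¬ PartRel p x w) (hout : w' < x ∨ y < w') : PartRel q x y := by
  rcases hout with hw'x | hyw'
  · have hcr : ({w', x, w, y} : Finset (Fin k)) ∈ cr p :=
      ⟨w', x, w, y, hw'x, hxw, hwy, rfl, hww'.symm, hxy, fun h => hxw' (h.symm.trans hww'.symm)⟩
    exact (partRel_of_insert_mem_cr hw'x hxw hwy (hpq hcr)).2
  · have hcr : ({x, w, y, w'} : Finset (Fin k)) ∈ cr p :=
      ⟨x, w, y, w', hxw, hwy, hyw', rfl, hxy, hww', hxw'⟩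
    exact (partRel_of_insert_mem_cr hxw hwy hyw' (hpq hcr)).1

section Crossing

variable (hpq : cr p ⊆ cr q) {a b c d : Fin k} (hab : a < b) (hbc : b < c) (hcd : c < d)
  (hac : PartRel p a c) (hbd : PartRel p b d) (hnab : ¬ PartRel p a b)
include hpq hab hbc hcd hac hbd hnab

lemma partRel_of_partRel_of_cross_fst {y : Fin k} (hay : PartRel p a y) : PartRel q a y := by
  have hqac : PartRel q a c := partRel_of_interleaved hpq hab hbc hac hbd hnab (.inr hcd)
  have hyb : y ≠ b := by rintro rfl; exact hnab hay
  have hyd : y ≠ d := by rintro rfl; exact hnab (hay.trans hbd.symm)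
  have hny : ∀ {w}, PartRel p b w → ¬ PartRel p y w := fun hbw hyw =>
    hnab (hay.trans (hyw.trans hbw.symm))
  rcases lt_or_gt_of_ne hyb with hyb | hby
  · exact hqac.trans
      (partRel_of_interleaved hpq hyb hbc (hay.symm.trans hac) hbd (hny (.refl p b)) (.inr hcd)).symm
  rcases lt_or_gt_of_ne hyd with hyd | hdy
  · exact partRel_of_interleaved hpq hab hby hay hbd hnab (.inr hyd)
  · exact hqac.trans (partRel_of_interleaved hpq hcd hdy (hac.symm.trans hay) hbd.symm
      (fun hcd' => hnab (hac.trans (hcd'.trans hbd.symm))) (.inl hbc))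

lemma partRel_of_partRel_of_cross_snd {y : Fin k} (hby : PartRel p b y) : PartRel q b y := by
  have hnbc : ¬ PartRel p b c := fun hbc' => hnab (hac.trans hbc'.symm)
  have hqbd : PartRel q b d := partRel_of_interleaved hpq hbc hcd hbd hac.symm hnbc (.inl hab)
  have hya : y ≠ a := by rintro rfl; exact hnab hby.symm
  have hyc : y ≠ c := by rintro rfl; exact hnbc hby
  have hny : ∀ {w}, PartRel p a w → ¬ PartRel p y w := fun haw hyw =>
    hnab (haw.trans (hyw.symm.trans hby.symm))
  rcases lt_or_gt_of_ne hya with hya | hay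
  · exact (partRel_of_interleaved hpq hya hab hby.symm hac (hny (.refl p a)) (.inr hbc)).symm
  rcases lt_or_gt_of_ne hyc with hyc | hcy
  · exact hqbd.trans (partRel_of_interleaved hpq hyc hcd (hby.symm.trans hbd) hac.symm
      (hny hac) (.inl hay)).symm
  · exact partRel_of_interleaved hpq hbc hcy hby hac.symm hnbc (.inl hab)

end Crossing

lemma partRel_of_partRel_of_mem_crossers (hpq : cr p ⊆ cr q) {x y : Fin k}
    (hx : x ∈ crossers p) (hxy : PartRel p x y) : PartRel q x y := by
  obtain ⟨κ, ⟨a, b, c, d, hab, hbc, hcd, rfl, hac, hbd, hnab⟩, hxκ⟩ := hx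
  have fst : ∀ {y}, PartRel p a y → PartRel q a y :=
    partRel_of_partRel_of_cross_fst hpq hab hbc hcd hac hbd hnab
  have snd : ∀ {y}, PartRel p b y → PartRel q b y :=
    partRel_of_partRel_of_cross_snd hpq hab hbc hcd hac hbd hnab
  simp only [Finset.mem_insert, Finset.mem_singleton] at hxκ
  rcases hxκ with rfl | rfl | rfl | rfl
  · exact fst hxy
  · exact snd hxy
  · exact (fst hac).symm.trans (fst (hac.trans hxy))
  · exact (snd hbd).symm.trans (snd (hbd.trans hxy))

end CrSubset

/-- if `cr p ⊆ cr q`, then for all crossers `x, y` of `p`,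
`x ∼_p y` implies `x ∼_q y`. -/
theorem stmt3 {k : ℕ} (p q : Finpartition (Finset.univ : Finset (Fin k)))
    (h : cr p ⊆ cr q) :
    ∀ x ∈ crossers p, ∀ y ∈ crossers p, PartRel p x y → PartRel q x y :=
  fun _ hx _ _ => partRel_of_partRel_of_mem_crossers h hx
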